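/- Suppose θ_i ≠ 0 for every i = 1,…,n (all tested hypotheses are false), the family {F_θ} satisfies the MLR assumption (Assumption 2), and the signed statistics sign(θ_1)·T_1, …, sign(θ_n)·T_n are positively regression dependent (Assumption 3). Then Procedure 2 (the directional fixed sequence procedure with constant critical value α) satisfies mdFWER ≤ α; here the mdFWER equals the probability of making at least one type 3 (directional) error. -/

import Mathlib

/-!
Write `S i = sign (θ i) * T i` and let `c` be the upper `α/2`-quantile of `F 0`, so that `H i` is
rejected iff `c ≤ |S i|`. If a directional error occurs, take the first index `i` with
`S i ≤ -c`: every earlier `S j` is then at least `c`; call this increasing event `G i`.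
The likelihood ratio `f (θ i) / f 0` compares the tail `{S i < -c}` with the acceptance region,
giving `P(S i < -c) ≤ α P(S i < c)`, and positive regression dependence gives
`P(G i | S i < -c) ≤ P(G i | S i < c)`. Hence `P(G i, S i ≤ -c) ≤ α P(G i, S i < c)`, and the
events `{G i, S i < c}` are disjoint, so summing over `i` bounds the mdFWER by `α`.
-/

open MeasureTheory ProbabilityTheory Filter Set Topology Function

theorem setIntegral_mul_setIntegral_le {α : Type*} [MeasurableSpace α] {μ : Measure α}
    {g h : α → ℝ} {A B : Set α} (hA : MeasurableSet A) (hB : MeasurableSet B)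
    (hgA : IntegrableOn g A μ) (hhA : IntegrableOn h A μ)
    (hgB : IntegrableOn g B μ) (hhB : IntegrableOn h B μ)
    (hgh : ∀ s ∈ A, ∀ t ∈ B, g s * h t ≤ h s * g t) :
    (∫ s in A, g s ∂μ) * (∫ t in B, h t ∂μ) ≤ (∫ s in A, h s ∂μ) * (∫ t in B, g t ∂μ) := by
  rw [← integral_mul_const, ← integral_mul_const]
  refine setIntegral_mono_on (hgA.mul_const _) (hhA.mul_const _) hA fun s hs => ?_
  rw [← integral_const_mul, ← integral_const_mul]
  exact setIntegral_mono_on (hhB.const_mul _) (hgB.const_mul _) hB (hgh s hs)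

section Density

variable {f F : ℝ → ℝ} {L : ℝ}

theorem integrable_of_tendsto_integral_Iic (hf : ∀ x, 0 ≤ f x)
    (hF : ∀ x, F x = ∫ t in Iic x, f t) (hL : L ≠ 0) (hlim : Tendsto F atTop (𝓝 L)) :
    Integrable f := by
  have hIic : ∀ x, IntegrableOn f (Iic x) := fun x => by
    obtain ⟨y, hxy, hy⟩ := ((eventually_ge_atTop x).and (hlim.eventually_ne hL)).exists
    have hfy : IntegrableOn f (Iic y) := by
      by_contra hnot
      exact hy (by rw [hF, integral_undef hnot])
    exact hfy.mono_set (Iic_subset_Iic.2 hxy)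
  exact (aecover_Iic tendsto_id).integrable_of_integral_tendsto_of_nonneg_ae L hIic
    (ae_of_all _ hf) (hlim.congr hF)

theorem integral_Ioi_eq_sub_of_tendsto (hfi : Integrable f)
    (hF : ∀ x, F x = ∫ t in Iic x, f t) (hlim : Tendsto F atTop (𝓝 L)) (c : ℝ) :
    ∫ t in Ioi c, f t = L - F c := by
  have htotal : ∫ t, f t = L :=
    (aecover_Iic tendsto_id).integral_eq_of_tendsto L hfi (hlim.congr hF)
  rw [hF, ← htotal, ← intervalIntegral.integral_Iic_add_Ioi hfi.integrableOn hfi.integrableOn]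
  ring

theorem integral_Ioc_eq_sub (hfi : Integrable f) (hF : ∀ x, F x = ∫ t in Iic x, f t)
    {a b : ℝ} (hab : a ≤ b) : ∫ t in Ioc a b, f t = F b - F a := by
  rw [hF, hF, intervalIntegral.integral_Iic_sub_Iic hfi.integrableOn hfi.integrableOn,
    intervalIntegral.integral_of_le hab]

theorem tendsto_atTop_of_symm (hF : ∀ x, F x = ∫ t in Iic x, f t)
    (hsym : ∀ x, F (-x) = 1 - F x) : Tendsto F atTop (𝓝 1) := by
  have hneg : Tendsto (fun x => F (-x)) atTop (𝓝 0) :=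
    (tendsto_integral_Iic_zero tendsto_neg_atTop_atBot).congr fun x => (hF (-x)).symm
  simpa [hsym] using hneg.const_sub 1

end Density

section ContinuousCDF

variable {Ω : Type*} [MeasurableSpace Ω] {P : Measure Ω} [IsProbabilityMeasure P]
  {X : Ω → ℝ} {G : ℝ → ℝ}

theorem cdf_map_eq (hX : Measurable X) (hXG : ∀ x, P.real {ω | X ω ≤ x} = G x) :
    ⇑(cdf (P.map X)) = G := by
  have := Measure.isProbabilityMeasure_map (μ := P) hX.aemeasurable
  ext x
  rw [cdf_eq_real, measureReal_def, Measure.map_apply hX measurableSet_Iic]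
  exact hXG x

theorem tendsto_atTop_of_cdf (hX : Measurable X) (hXG : ∀ x, P.real {ω | X ω ≤ x} = G x) :
    Tendsto G atTop (𝓝 1) := by
  have := Measure.isProbabilityMeasure_map (μ := P) hX.aemeasurable
  rw [← cdf_map_eq hX hXG]
  exact tendsto_cdf_atTop _

theorem measure_eq_eq_zero_of_continuous (hX : Measurable X) (hG : Continuous G)
    (hXG : ∀ x, P.real {ω | X ω ≤ x} = G x) (x : ℝ) : P {ω | X ω = x} = 0 := by
  have := Measure.isProbabilityMeasure_map (μ := P) hX.aemeasurable
  have hleft : Function.leftLim (cdf (P.map X)) x = cdf (P.map X) x := by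
    rw [cdf_map_eq hX hXG]
    exact leftLim_eq_of_tendsto ((hG.tendsto x).mono_left nhdsWithin_le_nhds)
  rw [show {ω | X ω = x} = X ⁻¹' {x} from rfl, ← Measure.map_apply hX (measurableSet_singleton x),
    ← measure_cdf (P.map X), StieltjesFunction.measure_singleton, hleft, sub_self,
    ENNReal.ofReal_zero]

theorem measureReal_lt_eq (hX : Measurable X) (hG : Continuous G)
    (hXG : ∀ x, P.real {ω | X ω ≤ x} = G x) (x : ℝ) : P.real {ω | X ω < x} = G x := by
  have hdiff : {ω | X ω < x} = {ω | X ω ≤ x} \ {ω | X ω = x} := by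
    ext ω
    simp [lt_iff_le_and_ne]
  rw [← hXG, hdiff, measureReal_def, measure_sdiff_null
    (measure_eq_eq_zero_of_continuous hX hG hXG x), measureReal_def]

theorem measureReal_gt_eq (hX : Measurable X) (hXG : ∀ x, P.real {ω | X ω ≤ x} = G x) (x : ℝ) :
    P.real {ω | x < X ω} = 1 - G x := by
  have hcompl : {ω | x < X ω} = {ω | X ω ≤ x}ᶜ := by
    ext ω
    simp
  rw [hcompl, probReal_compl_eq_one_sub (measurableSet_le hX measurable_const), hXG]

theorem measure_mul_eq_eq_zero_of_continuous (hX : Measurable X) (hG : Continuous G)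
    (hXG : ∀ x, P.real {ω | X ω ≤ x} = G x) {a : ℝ} (ha : a ≠ 0) (x : ℝ) :
    P {ω | a * X ω = x} = 0 := by
  have hset : {ω | a * X ω = x} = {ω | X ω = x / a} := by
    ext ω
    simp [eq_div_iff ha, mul_comm]
  rw [hset]
  exact measure_eq_eq_zero_of_continuous hX hG hXG _

end ContinuousCDF

section CriticalValue

variable {F : ℝ → ℝ}

theorem exists_pos_eq_one_sub_half (hcont : Continuous F) (hmono : StrictMono F)
    (hsym : ∀ x, F (-x) = 1 - F x) (hlim : Tendsto F atTop (𝓝 1)) {α : ℝ}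
    (hα : α ∈ Ioo (0 : ℝ) 1) : ∃ c, 0 < c ∧ F c = 1 - α / 2 := by
  obtain ⟨hα0, hα1⟩ := hα
  have hhalf : F 0 = 1 / 2 := by linarith [neg_zero (G := ℝ) ▸ hsym 0]
  obtain ⟨b, hb⟩ := (hlim.eventually (lt_mem_nhds (by linarith : 1 - α / 2 < 1))).exists
  obtain ⟨c, hc⟩ :=
    mem_range_of_exists_le_of_exists_ge hcont ⟨0, by linarith⟩ ⟨b, hb.le⟩
  exact ⟨c, hmono.lt_iff_lt.1 (by linarith), hc⟩

theorem le_abs_of_two_mul_min_le (hmono : StrictMono F) {α c t : ℝ}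
    (hc : F c = 1 - α / 2) (hc' : F (-c) = α / 2) (ht : 2 * min (F t) (1 - F t) ≤ α) :
    c ≤ |t| := by
  rw [le_abs']
  rcases min_le_iff.1 (by linarith : min (F t) (1 - F t) ≤ α / 2) with h | h
  · exact Or.inl (hmono.le_iff_le.1 (by linarith))
  · exact Or.inr (hmono.le_iff_le.1 (by linarith))

end CriticalValue

theorem abs_sign_mul_of_ne_zero {θ : ℝ} (hθ : θ ≠ 0) (t : ℝ) : |Real.sign θ * t| = |t| := by
  rcases Real.sign_apply_eq_of_ne_zero θ hθ with h | h <;> simp [h]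

theorem sign_mul_neg_of_mul_neg {θ t : ℝ} (h : θ * t < 0) : Real.sign θ * t < 0 := by
  rcases lt_trichotomy θ 0 with hθ | rfl | hθ
  · rw [Real.sign_of_neg hθ]
    nlinarith
  · simp at h
  · rw [Real.sign_of_pos hθ]
    nlinarith

section FirstCrossing

variable {ι : Type*} [LinearOrder ι]

def aboveBefore (c : ℝ) (i : ι) : Set (ι → ℝ) := {x | ∀ j < i, c ≤ x j}

theorem isUpperSet_aboveBefore (c : ℝ) (i : ι) : IsUpperSet (aboveBefore c i) :=
  fun _ _ hxy hx j hj => (hx j hj).trans (hxy j)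

theorem measurableSet_aboveBefore [Countable ι] (c : ℝ) (i : ι) :
    MeasurableSet (aboveBefore c i) := by
  simp only [aboveBefore, ofPred_forall]
  exact MeasurableSet.iInter fun j => MeasurableSet.iInter fun _ =>
    measurableSet_le measurable_const (measurable_pi_apply j)

theorem exists_mem_aboveBefore_le_neg [WellFoundedLT ι] {x : ι → ℝ} {c : ℝ} {i : ι}
    (hrej : ∀ j ≤ i, c ≤ |x j|) (hi : x i < 0) : ∃ k, x ∈ aboveBefore c k ∧ x k ≤ -c := by
  have hlow : ∀ j ≤ i, x j < c → x j ≤ -c := fun j hj hlt =>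
    (le_abs'.1 (hrej j hj)).resolve_right hlt.not_ge
  have hci : c ≤ -x i := abs_of_neg hi ▸ hrej i le_rfl
  obtain ⟨k, hk, hmin⟩ := wellFounded_lt.has_min {j | j ≤ i ∧ x j ≤ -c}
    ⟨i, le_rfl, by linarith⟩
  refine ⟨k, fun j hj => ?_, hk.2⟩
  have hji : j ≤ i := hj.le.trans hk.1
  by_contra hlt
  exact hmin j ⟨hji, hlow j hji (not_le.1 hlt)⟩ hj

theorem pairwise_disjoint_aboveBefore_inter_lt (c : ℝ) :
    Pairwise (Disjoint on fun i : ι => aboveBefore c i ∩ {x | x i < c}) := by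
  intro i j hij
  rcases hij.lt_or_gt with h | h
  · exact disjoint_left.2 fun x hi hj => not_le.2 hi.2 (hj.1 i h)
  · exact disjoint_left.2 fun x hi hj => not_le.2 hj.2 (hi.1 j h)

end FirstCrossing

section Events

variable {Ω : Type*} [MeasurableSpace Ω] {P : Measure Ω}

theorem measureReal_iUnion_le_of_le_mul [IsProbabilityMeasure P] {ι : Type*} [Fintype ι]
    {E D : ι → Set Ω} {α : ℝ} (hα : 0 ≤ α) (hD : Pairwise (Disjoint on D))
    (hDm : ∀ i, MeasurableSet (D i)) (hED : ∀ i, P.real (E i) ≤ α * P.real (D i)) :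
    P.real (⋃ i, E i) ≤ α :=
  calc P.real (⋃ i, E i) ≤ ∑ i, P.real (E i) := measureReal_iUnion_fintype_le _
    _ ≤ ∑ i, α * P.real (D i) := Finset.sum_le_sum fun i _ => hED i
    _ = α * P.real (⋃ i, D i) := by rw [← Finset.mul_sum, measureReal_iUnion_fintype hD hDm]
    _ ≤ α := mul_le_of_le_one_right hα measureReal_le_one

theorem measureReal_inter_le_eq_of_null {H : Set Ω} {Z : Ω → ℝ} {a : ℝ}
    (hnull : P {ω | Z ω = a} = 0) :
    P.real (H ∩ {ω | Z ω ≤ a}) = P.real (H ∩ {ω | Z ω < a}) := by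
  have hdiff : H ∩ {ω | Z ω < a} = (H ∩ {ω | Z ω ≤ a}) \ {ω | Z ω = a} := by
    ext ω
    simp [lt_iff_le_and_ne, and_assoc]
  rw [hdiff, measureReal_def, measureReal_def, measure_sdiff_null hnull]

theorem measureReal_inter_le_mul_of_div_le [IsFiniteMeasure P] {A B H : Set Ω} {α : ℝ}
    (hAB : A ⊆ B) (hα : 0 ≤ α)
    (hdiv : P A ≠ 0 → P B ≠ 0 → P.real (H ∩ A) / P.real A ≤ P.real (H ∩ B) / P.real B)
    (hA : P.real A ≤ α * P.real B) : P.real (H ∩ A) ≤ α * P.real (H ∩ B) := by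
  by_cases hA0 : P A = 0
  · have hA0' : P.real A = 0 := by simp [measureReal_def, hA0]
    have : P.real (H ∩ A) ≤ P.real A := measureReal_mono inter_subset_right
    have : 0 ≤ P.real (H ∩ B) := measureReal_nonneg
    nlinarith
  have hB0 : P B ≠ 0 := fun h => hA0 (measure_mono_null hAB h)
  have hpA : 0 < P.real A := ENNReal.toReal_pos hA0 (measure_ne_top _ _)
  have hpB : 0 < P.real B := ENNReal.toReal_pos hB0 (measure_ne_top _ _)
  calc P.real (H ∩ A) ≤ P.real A * (P.real (H ∩ B) / P.real B) :=
        (div_le_iff₀' hpA).1 (hdiv hA0 hB0)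
    _ ≤ α * P.real B * (P.real (H ∩ B) / P.real B) := by gcongr
    _ = α * P.real (H ∩ B) := by field_simp

theorem setIntegral_indicator_one_comp {E : Type*} [MeasurableSpace E] {Y : Ω → E}
    (hY : Measurable Y) {U : Set E} (hU : MeasurableSet U) (A : Set Ω) :
    ∫ ω in A, U.indicator 1 (Y ω) ∂P = P.real (Y ⁻¹' U ∩ A) := by
  simp_rw [show ∀ ω, U.indicator (1 : E → ℝ) (Y ω) = (Y ⁻¹' U).indicator 1 ω from fun ω => rfl]
  rw [integral_indicator_one (hY hU), measureReal_restrict_apply (hY hU)]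

theorem measureReal_inter_le_mul_of_prd [IsFiniteMeasure P] {ι : Type*} {Y : Ω → ι → ℝ}
    (hY : Measurable Y) {k : ι} {u u' α : ℝ} (huu' : u ≤ u') (hα : 0 ≤ α)
    (hPRD : ∀ φ : (ι → ℝ) → ℝ, Measurable φ → Monotone φ → (∃ C, ∀ x, |φ x| ≤ C) →
      P {ω | Y ω k < u} ≠ 0 → P {ω | Y ω k < u'} ≠ 0 →
      (∫ ω in {ω | Y ω k < u}, φ (Y ω) ∂P) / P.real {ω | Y ω k < u} ≤
        (∫ ω in {ω | Y ω k < u'}, φ (Y ω) ∂P) / P.real {ω | Y ω k < u'})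
    (hmarg : P.real {ω | Y ω k < u} ≤ α * P.real {ω | Y ω k < u'})
    {U : Set (ι → ℝ)} (hU : IsUpperSet U) (hUm : MeasurableSet U) :
    P.real (Y ⁻¹' U ∩ {ω | Y ω k < u}) ≤ α * P.real (Y ⁻¹' U ∩ {ω | Y ω k < u'}) := by
  have hmono : Monotone (U.indicator (1 : (ι → ℝ) → ℝ)) := fun x y hxy => by
    by_cases hx : x ∈ U
    · rw [indicator_of_mem hx, indicator_of_mem (hU hxy hx)]
      rfl
    · rw [indicator_of_notMem hx]
      exact indicator_nonneg (fun _ _ => zero_le_one) y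
  have hbdd : ∃ C, ∀ x, |U.indicator (1 : (ι → ℝ) → ℝ) x| ≤ C :=
    ⟨1, fun x => by by_cases hx : x ∈ U <;> simp [hx]⟩
  refine measureReal_inter_le_mul_of_div_le (fun ω (h : Y ω k < u) => h.trans_le huu') hα ?_
    hmarg
  simpa only [setIntegral_indicator_one_comp hY hUm] using
    hPRD _ (measurable_one.indicator hUm) hmono hbdd

end Events

section MonotoneLikelihoodRatio

variable {Ω : Type*} [MeasurableSpace Ω] {P : Measure Ω} [IsProbabilityMeasure P]

theorem measureReal_sign_mul_lt_neg_le {F f : ℝ → ℝ → ℝ} (hf : ∀ θ x, 0 ≤ f θ x)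
    (hF : ∀ θ x, F θ x = ∫ t in Iic x, f θ t)
    (hMLR : ∀ θ' θ'' : ℝ, θ' < θ'' → ∀ x₁ x₂ : ℝ, x₁ < x₂ →
      f θ'' x₁ * f θ' x₂ ≤ f θ'' x₂ * f θ' x₁)
    (hF0 : Tendsto (F 0) atTop (𝓝 1)) {θ : ℝ} (hθ : θ ≠ 0) (hFθ : Continuous (F θ))
    {X : Ω → ℝ} (hX : Measurable X) (hXF : ∀ x, P.real {ω | X ω ≤ x} = F θ x)
    {α c : ℝ} (hα : α ∈ Ioo (0 : ℝ) 1) (hc : 0 ≤ c)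
    (hc₁ : F 0 (-c) = α / 2) (hc₂ : F 0 c = 1 - α / 2) :
    P.real {ω | Real.sign θ * X ω < -c} ≤ α * P.real {ω | Real.sign θ * X ω < c} := by
  have hFθlim := tendsto_atTop_of_cdf hX hXF
  have hfθ := integrable_of_tendsto_integral_Iic (hf θ) (hF θ) one_ne_zero hFθlim
  have hf0 := integrable_of_tendsto_integral_Iic (hf 0) (hF 0) one_ne_zero hF0
  -- `{sign θ * X < -c}` is `{X ∈ A}` for the tail `A = Ioi c` (if `θ < 0`) or `Iic (-c)`
  -- (if `θ > 0`); MLR makes `f θ / f 0` on `A` dominated by its values on `Ioc (-c) c`.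
  obtain ⟨A, hA, hratio, hA0, hlow, hup⟩ : ∃ A : Set ℝ, MeasurableSet A ∧
      (∀ s ∈ A, ∀ t ∈ Ioc (-c) c, f θ s * f 0 t ≤ f 0 s * f θ t) ∧
      ∫ t in A, f 0 t = α / 2 ∧
      P.real {ω | Real.sign θ * X ω < -c} = ∫ t in A, f θ t ∧
      P.real {ω | Real.sign θ * X ω < c} = (∫ t in A, f θ t) + (F θ c - F θ (-c)) := by
    rcases hθ.lt_or_gt with hneg | hpos
    · have hS : ∀ u, P.real {ω | Real.sign θ * X ω < u} = 1 - F θ (-u) := fun u => by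
        rw [← measureReal_gt_eq hX hXF, Real.sign_of_neg hneg]
        simp only [neg_one_mul, neg_lt]
      refine ⟨Ioi c, measurableSet_Ioi, fun s hs t ht => ?_, ?_, ?_, ?_⟩
      · linarith [hMLR θ 0 hneg t s (ht.2.trans_lt hs)]
      · rw [integral_Ioi_eq_sub_of_tendsto hf0 (hF 0) hF0, hc₂]
        ring
      · rw [hS, integral_Ioi_eq_sub_of_tendsto hfθ (hF θ) hFθlim, neg_neg]
      · rw [hS, integral_Ioi_eq_sub_of_tendsto hfθ (hF θ) hFθlim]
        ring
    · have hS : ∀ u, P.real {ω | Real.sign θ * X ω < u} = F θ u := fun u => by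
        rw [← measureReal_lt_eq hX hFθ hXF, Real.sign_of_pos hpos]
        simp only [one_mul]
      refine ⟨Iic (-c), measurableSet_Iic, fun s hs t ht => ?_, ?_, ?_, ?_⟩
      · linarith [hMLR 0 θ hpos s t (hs.trans_lt ht.1)]
      · rw [← hF, hc₁]
      · rw [hS, hF]
      · rw [hS, ← hF]
        ring
  have htail := setIntegral_mul_setIntegral_le hA measurableSet_Ioc hfθ.integrableOn
    hf0.integrableOn hfθ.integrableOn hf0.integrableOn hratio
  rw [hA0, integral_Ioc_eq_sub hf0 (hF 0) (by linarith), hc₁, hc₂,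
    integral_Ioc_eq_sub hfθ (hF θ) (by linarith), ← hlow] at htail
  have hp : 0 ≤ P.real {ω | Real.sign θ * X ω < -c} := measureReal_nonneg
  rw [hup, ← hlow]
  nlinarith [hα.1, hα.2]

end MonotoneLikelihoodRatio

theorem procedure2_controls_mdFWER_all_false_general
    {Ω : Type*} [MeasurableSpace Ω] (Pr : Measure Ω) [IsProbabilityMeasure Pr]
    (F : ℝ → ℝ → ℝ)
    (hFcont : ∀ θ', Continuous (F θ'))
    (hF0strict : StrictMono (F 0))
    (hFsym : ∀ x : ℝ, F 0 (-x) = 1 - F 0 x)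
    -- MLR assumption (Assumption 2)
    (f : ℝ → ℝ → ℝ)
    (hf_nonneg : ∀ θ' x, 0 ≤ f θ' x)
    (hf_cdf : ∀ θ' x, F θ' x = ∫ t in Set.Iic x, f θ' t)
    (hMLR : ∀ θ' θ'' : ℝ, θ' < θ'' → ∀ x₁ x₂ : ℝ, x₁ < x₂ →
      f θ'' x₁ * f θ' x₂ ≤ f θ'' x₂ * f θ' x₁)
    (n : ℕ) (θ : Fin n → ℝ) (hθ : ∀ i, θ i ≠ 0)
    (T : Fin n → Ω → ℝ) (hT : ∀ i, Measurable (T i))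
    (hcdf : ∀ i x, (Pr {ω | T i ω ≤ x}).toReal = F (θ i) x)
    -- Assumption 3: positive regression dependence of the signed statistics
    (hPRD : ∀ k : Fin n, ∀ φ : (Fin n → ℝ) → ℝ,
      Measurable φ → Monotone φ → (∃ C, ∀ x, |φ x| ≤ C) →
      ∀ u u' : ℝ, u ≤ u' →
        (Pr {ω | u ≤ Real.sign (θ k) * T k ω} ≠ 0 →
         Pr {ω | u' ≤ Real.sign (θ k) * T k ω} ≠ 0 →
          (∫ ω in {ω | u ≤ Real.sign (θ k) * T k ω},
              φ (fun i => Real.sign (θ i) * T i ω) ∂Pr)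
              / (Pr {ω | u ≤ Real.sign (θ k) * T k ω}).toReal
            ≤ (∫ ω in {ω | u' ≤ Real.sign (θ k) * T k ω},
              φ (fun i => Real.sign (θ i) * T i ω) ∂Pr)
              / (Pr {ω | u' ≤ Real.sign (θ k) * T k ω}).toReal) ∧
        (Pr {ω | Real.sign (θ k) * T k ω < u} ≠ 0 →
         Pr {ω | Real.sign (θ k) * T k ω < u'} ≠ 0 →
          (∫ ω in {ω | Real.sign (θ k) * T k ω < u},
              φ (fun i => Real.sign (θ i) * T i ω) ∂Pr)
              / (Pr {ω | Real.sign (θ k) * T k ω < u}).toReal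
            ≤ (∫ ω in {ω | Real.sign (θ k) * T k ω < u'},
              φ (fun i => Real.sign (θ i) * T i ω) ∂Pr)
              / (Pr {ω | Real.sign (θ k) * T k ω < u'}).toReal))
    (α : ℝ) (hα : α ∈ Set.Ioo (0 : ℝ) 1) :
    (Pr {ω | ∃ i : Fin n,
        (∀ j : Fin n, j ≤ i →
          2 * min (F 0 (T j ω)) (1 - F 0 (T j ω)) ≤ α) ∧
        (θ i = 0 ∨ (θ i ≠ 0 ∧ θ i * T i ω < 0))}).toReal ≤ α := by
  set V : Ω → Fin n → ℝ := fun ω i => Real.sign (θ i) * T i ω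
  have hV : Measurable V := measurable_pi_lambda _ fun i => (hT i).const_mul _
  have hF0 := tendsto_atTop_of_symm (hf_cdf 0) hFsym
  obtain ⟨c, hc, hc₂⟩ := exists_pos_eq_one_sub_half (hFcont 0) hF0strict hFsym hF0 hα
  have hc₁ : F 0 (-c) = α / 2 := by rw [hFsym, hc₂]; ring
  have hkey : ∀ i, Pr.real (V ⁻¹' (aboveBefore c i ∩ {x | x i ≤ -c}))
      ≤ α * Pr.real (V ⁻¹' (aboveBefore c i ∩ {x | x i < c})) := fun i => by
    have hmarg := measureReal_sign_mul_lt_neg_le hf_nonneg hf_cdf hMLR hF0 (hθ i) (hFcont _)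
      (hT i) (hcdf i) hα hc.le hc₁ hc₂
    have hnull : Pr {ω | V ω i = -c} = 0 := measure_mul_eq_eq_zero_of_continuous (hT i)
      (hFcont _) (hcdf i) (mt Real.sign_eq_zero_iff.1 (hθ i)) _
    calc Pr.real (V ⁻¹' (aboveBefore c i ∩ {x | x i ≤ -c}))
        = Pr.real (V ⁻¹' aboveBefore c i ∩ {ω | V ω i < -c}) :=
          measureReal_inter_le_eq_of_null (Z := fun ω => V ω i) hnull
      _ ≤ α * Pr.real (V ⁻¹' aboveBefore c i ∩ {ω | V ω i < c}) :=
          measureReal_inter_le_mul_of_prd hV (by linarith) hα.1.le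
            (fun φ hm hmono hbdd => (hPRD i φ hm hmono hbdd (-c) c (by linarith)).2) hmarg
            (isUpperSet_aboveBefore c i) (measurableSet_aboveBefore c i)
  calc _ ≤ Pr.real (⋃ i, V ⁻¹' (aboveBefore c i ∩ {x | x i ≤ -c})) := by
        refine measureReal_mono ?_
        rintro ω ⟨i, hrej, h0 | ⟨-, hneg⟩⟩
        · exact absurd h0 (hθ i)
        refine mem_iUnion.2 (exists_mem_aboveBefore_le_neg (fun j hj => ?_)
          (sign_mul_neg_of_mul_neg hneg))
        rw [abs_sign_mul_of_ne_zero (hθ j)]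
        exact le_abs_of_two_mul_min_le hF0strict hc₂ hc₁ (hrej j hj)
    _ ≤ α := measureReal_iUnion_le_of_le_mul hα.1.le
      (fun i j hij => (pairwise_disjoint_aboveBefore_inter_lt c hij).preimage V)
      (fun i => hV ((measurableSet_aboveBefore c i).inter
        (measurableSet_lt (measurable_pi_apply i) measurable_const))) hkey

/-- Corollary 1: When all tested hypotheses are false (θ_i ≠ 0 for all i),
under MLR (Assumption 2) and positive regression dependence of the signed statistics
sign(θ_i)·T_i (Assumption 3), Procedure 2 (constant critical value α) satisfies
mdFWER ≤ α (here only type 3 errors can occur). -/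
theorem procedure2_controls_mdFWER_all_false
    {Ω : Type*} [MeasurableSpace Ω] (Pr : Measure Ω) [IsProbabilityMeasure Pr]
    (F : ℝ → ℝ → ℝ)
    (hFcont : ∀ θ', Continuous (F θ'))
    (hFmono : ∀ θ', Monotone (F θ'))
    (hF0strict : StrictMono (F 0))
    (hFsym : ∀ x : ℝ, F 0 (-x) = 1 - F 0 x)
    (hstoch : ∀ θ' θ'' : ℝ, θ' ≤ θ'' → ∀ x, F θ'' x ≤ F θ' x)
    -- MLR assumption (Assumption 2)
    (f : ℝ → ℝ → ℝ)
    (hf_nonneg : ∀ θ' x, 0 ≤ f θ' x)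
    (hf_meas : ∀ θ', Measurable (f θ'))
    (hf_cdf : ∀ θ' x, F θ' x = ∫ t in Set.Iic x, f θ' t)
    (hMLR : ∀ θ' θ'' : ℝ, θ' < θ'' → ∀ x₁ x₂ : ℝ, x₁ < x₂ →
      f θ'' x₁ * f θ' x₂ ≤ f θ'' x₂ * f θ' x₁)
    (n : ℕ) (θ : Fin n → ℝ) (hθ : ∀ i, θ i ≠ 0)
    (T : Fin n → Ω → ℝ) (hT : ∀ i, Measurable (T i))
    (hcdf : ∀ i x, (Pr {ω | T i ω ≤ x}).toReal = F (θ i) x)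
    -- Assumption 3: positive regression dependence of the signed statistics
    (hPRD : ∀ k : Fin n, ∀ φ : (Fin n → ℝ) → ℝ,
      Measurable φ → Monotone φ → (∃ C, ∀ x, |φ x| ≤ C) →
      ∀ u u' : ℝ, u ≤ u' →
        (Pr {ω | u ≤ Real.sign (θ k) * T k ω} ≠ 0 →
         Pr {ω | u' ≤ Real.sign (θ k) * T k ω} ≠ 0 →
          (∫ ω in {ω | u ≤ Real.sign (θ k) * T k ω},
              φ (fun i => Real.sign (θ i) * T i ω) ∂Pr)
              / (Pr {ω | u ≤ Real.sign (θ k) * T k ω}).toReal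
            ≤ (∫ ω in {ω | u' ≤ Real.sign (θ k) * T k ω},
              φ (fun i => Real.sign (θ i) * T i ω) ∂Pr)
              / (Pr {ω | u' ≤ Real.sign (θ k) * T k ω}).toReal) ∧
        (Pr {ω | Real.sign (θ k) * T k ω < u} ≠ 0 →
         Pr {ω | Real.sign (θ k) * T k ω < u'} ≠ 0 →
          (∫ ω in {ω | Real.sign (θ k) * T k ω < u},
              φ (fun i => Real.sign (θ i) * T i ω) ∂Pr)
              / (Pr {ω | Real.sign (θ k) * T k ω < u}).toReal
            ≤ (∫ ω in {ω | Real.sign (θ k) * T k ω < u'},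
              φ (fun i => Real.sign (θ i) * T i ω) ∂Pr)
              / (Pr {ω | Real.sign (θ k) * T k ω < u'}).toReal))
    (α : ℝ) (hα : α ∈ Set.Ioo (0 : ℝ) 1) :
    (Pr {ω | ∃ i : Fin n,
        (∀ j : Fin n, j ≤ i →
          2 * min (F 0 (T j ω)) (1 - F 0 (T j ω)) ≤ α) ∧
        (θ i = 0 ∨ (θ i ≠ 0 ∧ θ i * T i ω < 0))}).toReal ≤ α :=
  procedure2_controls_mdFWER_all_false_general Pr F hFcont hF0strict hFsym f hf_nonneg hf_cdf hMLR n
    θ hθ T hT hcdf hPRD α hα
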